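/- Let T ∈ B(H) be m-concave (β_m(T) ≤ 0). Then β_{m-1}(T) ≥ 0, and for every n ≥ m, T*ⁿTⁿ ≤ Σ_{j=0}^{m-1} binom(n,j) β_j(T). -/

import Mathlib

open ContinuousLinearMap

/-- The `r`-th defect operator `β_r(T) = Σ_{j=0}^{r} (r choose j)(-1)^{r-j} T*^j T^j`. -/
noncomputable def defectOp {H : Type*} [NormedAddCommGroup H] [InnerProductSpace ℂ H]
    [CompleteSpace H] (r : ℕ) (T : H →L[ℂ] H) : H →L[ℂ] H :=
  ∑ j ∈ Finset.range (r + 1),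
    (((-1 : ℂ) ^ (r - j)) * (r.choose j : ℂ)) • ((adjoint T) ^ j * T ^ j)

/-!
For `x ∈ H` put `a n = ‖Tⁿ x‖²`. Expanding the inner product gives
`re ⟪β_r(T) Tᵏ x, Tᵏ x⟫ = Δʳ a k`, so `m`-concavity says exactly that every such sequence has
nonpositive `m`-th forward differences. Both claims are then facts about a nonnegative real
sequence `a` with `Δᵐ a ≤ 0`:
* `Δᵐ⁻¹ a 0 ≥ 0`, since otherwise the nonincreasing sequence `Δᵐ⁻¹ a` stays below a negative
  constant, and summing up `m - 1` times forces `a n → -∞`;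
* `a n ≤ Σ_{j<m} C(n,j) Δʲ a 0` for `n ≥ m`: Newton's forward-difference expansion truncated
  at order `m`, proved by induction on `m` with Pascal's rule.
-/

open Filter Finset Function

section FwdDiff

variable {f : ℕ → ℝ}

lemma add_le_add_mul_of_fwdDiff_le {c : ℝ} {N : ℕ} (h : ∀ n ≥ N, fwdDiff 1 f n ≤ c) (k : ℕ) :
    f (N + k) ≤ f N + k * c := by
  induction k with
  | zero => simp
  | succ k ih =>
    have hk := h (N + k) (by omega)
    rw [fwdDiff] at hk
    push_cast
    rw [← add_assoc]
    linarith

lemma tendsto_atBot_of_eventually_fwdDiff_le {c : ℝ} (hc : c < 0)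
    (h : ∀ᶠ n in atTop, fwdDiff 1 f n ≤ c) : Tendsto f atTop atBot := by
  obtain ⟨N, hN⟩ := eventually_atTop.1 h
  rw [← tendsto_add_atTop_iff_nat N]
  refine tendsto_atBot_mono (fun k => add_comm k N ▸ add_le_add_mul_of_fwdDiff_le hN k) ?_
  exact tendsto_atBot_add_const_left _ _ (tendsto_natCast_atTop_atTop.atTop_mul_const_of_neg hc)

lemma tendsto_atBot_of_iterate_fwdDiff_le {c : ℝ} (hc : c < 0) {k : ℕ}
    (h : ∀ n, (fwdDiff 1)^[k + 1] f n ≤ c) : Tendsto f atTop atBot := by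
  induction k generalizing f with
  | zero => exact tendsto_atBot_of_eventually_fwdDiff_le hc (.of_forall h)
  | succ k ih =>
    have hΔ : Tendsto (fwdDiff 1 f) atTop atBot := ih fun n => by
      simpa only [← iterate_succ_apply] using h n
    exact tendsto_atBot_of_eventually_fwdDiff_le neg_one_lt_zero (hΔ.eventually_le_atBot (-1))

/-- Truncated subtraction: for `m = 0` this reads `0 ≤ f 0`. -/
lemma iterate_fwdDiff_pred_nonneg {m : ℕ} (hf : ∀ n, 0 ≤ f n) (h : ∀ n, (fwdDiff 1)^[m] f n ≤ 0) :
    0 ≤ (fwdDiff 1)^[m - 1] f 0 := by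
  cases m with
  | zero => exact hf 0
  | succ j =>
    by_contra! hneg
    have hanti : Antitone ((fwdDiff 1)^[j] f) := antitone_nat_of_succ_le fun n => by
      have hn := h n
      rw [iterate_succ_apply', fwdDiff] at hn
      linarith
    cases j with
    | zero => exact hneg.not_ge (hf 0)
    | succ i =>
      obtain ⟨n, hn⟩ := ((tendsto_atBot_of_iterate_fwdDiff_le (k := i) hneg
        fun n => hanti (Nat.zero_le n)).eventually_lt_atBot 0).exists
      exact hn.not_ge (hf n)

lemma sum_range_succ_choose_succ_mul (a : ℕ → ℝ) (n m : ℕ) :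
    ∑ j ∈ range (m + 1), ((n + 1).choose j : ℝ) * a j
      = ∑ j ∈ range (m + 1), (n.choose j : ℝ) * a j
        + ∑ j ∈ range m, (n.choose j : ℝ) * a (j + 1) := by
  rw [sum_range_succ' _ m, sum_range_succ' (fun j => (n.choose j : ℝ) * a j) m]
  simp only [Nat.choose_succ_succ, Nat.cast_add, add_mul, sum_add_distrib, Nat.choose_zero_right]
  ring

lemma le_sum_choose_mul_iterate_fwdDiff {m : ℕ} (h : ∀ k, (fwdDiff 1)^[m] f k ≤ 0) {n : ℕ}
    (hn : m ≤ n) : f n ≤ ∑ j ∈ range m, (n.choose j : ℝ) * (fwdDiff 1)^[j] f 0 := by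
  induction m generalizing f n with
  | zero => simpa using h n
  | succ m ih =>
    have hΔ : ∀ n ≥ m, fwdDiff 1 f n ≤ ∑ j ∈ range m, (n.choose j : ℝ) * (fwdDiff 1)^[j + 1] f 0 :=
      fun n hn => by
        simpa only [← iterate_succ_apply] using ih (f := fwdDiff 1 f)
          (fun k => by simpa only [← iterate_succ_apply] using h k) hn
    suffices ∀ n ≥ m, f n ≤ ∑ j ∈ range (m + 1), (n.choose j : ℝ) * (fwdDiff 1)^[j] f 0 from
      this n (by omega)
    intro n hn
    induction n, hn using Nat.le_induction with
    | base => simpa [mul_comm] using (shift_eq_sum_fwdDiff_iter 1 f m 0).le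
    | succ n hmn ihn =>
      calc f (n + 1) = f n + fwdDiff 1 f n := by simp [fwdDiff]
        _ ≤ _ := add_le_add ihn (hΔ n hmn)
        _ = _ := (sum_range_succ_choose_succ_mul _ n m).symm

end FwdDiff

section Operator

variable {E : Type*} [NormedAddCommGroup E] [InnerProductSpace ℂ E]

lemma isSelfAdjoint_sum_ofReal_smul {A : Type*} [AddCommMonoid A] [StarAddMonoid A] [Module ℂ A]
    [StarModule ℂ A] {ι : Type*} (s : Finset ι) (c : ι → ℝ) {a : ι → A}
    (ha : ∀ i ∈ s, IsSelfAdjoint (a i)) : IsSelfAdjoint (∑ i ∈ s, (c i : ℂ) • a i) :=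
  isSelfAdjoint_sum s fun i hi => IsSelfAdjoint.smul (Complex.conj_ofReal (c i)) (ha i hi)

lemma reApplyInnerSelf_sum_ofReal_smul {ι : Type*} (s : Finset ι) (c : ι → ℝ)
    (A : ι → E →L[ℂ] E) (x : E) :
    (∑ i ∈ s, (c i : ℂ) • A i).reApplyInnerSelf x = ∑ i ∈ s, c i * (A i).reApplyInnerSelf x := by
  simp only [reApplyInnerSelf_apply, _root_.sum_apply, sum_inner, map_sum, smul_apply,
    inner_smul_left, Complex.conj_ofReal, RCLike.re_to_complex, Complex.re_ofReal_mul]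

lemma reApplyInnerSelf_sub (A B : E →L[ℂ] E) (x : E) :
    (A - B).reApplyInnerSelf x = A.reApplyInnerSelf x - B.reApplyInnerSelf x := by
  simp [reApplyInnerSelf_apply, inner_sub_left]

variable [CompleteSpace E]

lemma adjoint_pow_mul_pow_eq_star_mul_self (T : E →L[ℂ] E) (j : ℕ) :
    adjoint T ^ j * T ^ j = star (T ^ j) * T ^ j := by
  rw [star_pow, star_eq_adjoint]

lemma reApplyInnerSelf_adjoint_pow_mul_pow (T : E →L[ℂ] E) (j : ℕ) (x : E) :
    (adjoint T ^ j * T ^ j).reApplyInnerSelf x = ‖(T ^ j) x‖ ^ 2 := by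
  rw [adjoint_pow_mul_pow_eq_star_mul_self, reApplyInnerSelf_apply, mul_apply_eq_comp,
    star_eq_adjoint, adjoint_inner_left, inner_self_eq_norm_sq]

lemma defectOp_eq_sum_ofReal_smul (r : ℕ) (T : E →L[ℂ] E) :
    defectOp r T = ∑ j ∈ range (r + 1),
      (((-1 : ℝ) ^ (r - j) * r.choose j : ℝ) : ℂ) • (adjoint T ^ j * T ^ j) := by
  simp [defectOp]

lemma isSelfAdjoint_defectOp (r : ℕ) (T : E →L[ℂ] E) : IsSelfAdjoint (defectOp r T) := by
  rw [defectOp_eq_sum_ofReal_smul]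
  exact isSelfAdjoint_sum_ofReal_smul _ _ fun j _ =>
    adjoint_pow_mul_pow_eq_star_mul_self T j ▸ .star_mul_self _

lemma reApplyInnerSelf_defectOp_pow_apply (r : ℕ) (T : E →L[ℂ] E) (k : ℕ) (x : E) :
    (defectOp r T).reApplyInnerSelf ((T ^ k) x) = (fwdDiff 1)^[r] (fun n => ‖(T ^ n) x‖ ^ 2) k := by
  rw [defectOp_eq_sum_ofReal_smul, reApplyInnerSelf_sum_ofReal_smul, fwdDiff_iter_eq_sum_shift]
  refine sum_congr rfl fun j _ => ?_
  rw [reApplyInnerSelf_adjoint_pow_mul_pow, ← mul_apply_eq_comp, ← pow_add, zsmul_eq_mul]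
  push_cast
  ring_nf

end Operator

/-- If `T` is `m`-concave (`β_m(T) ≤ 0`), then `β_{m-1}(T) ≥ 0` and for every `n ≥ m`,
`T*ⁿTⁿ ≤ Σ_{j=0}^{m-1} binom(n,j) β_j(T)`. -/
theorem m_concave_bounds {H : Type*} [NormedAddCommGroup H] [InnerProductSpace ℂ H]
    [CompleteSpace H] (T : H →L[ℂ] H) (m : ℕ)
    (hconc : (-(defectOp m T)).IsPositive) :
    (defectOp (m - 1) T).IsPositive ∧
      ∀ n : ℕ, m ≤ n →
        ((∑ j ∈ Finset.range m, (n.choose j : ℂ) • defectOp j T)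
          - (adjoint T) ^ n * T ^ n).IsPositive := by
  have hβ (r : ℕ) (x : H) :
      (defectOp r T).reApplyInnerSelf x = (fwdDiff 1)^[r] (fun n => ‖(T ^ n) x‖ ^ 2) 0 := by
    simpa using reApplyInnerSelf_defectOp_pow_apply r T 0 x
  have hconcave (x : H) (k : ℕ) : (fwdDiff 1)^[m] (fun n => ‖(T ^ n) x‖ ^ 2) k ≤ 0 := by
    rw [← reApplyInnerSelf_defectOp_pow_apply]
    simpa [reApplyInnerSelf_apply] using hconc.re_inner_nonneg_left ((T ^ k) x)
  simp_rw [← Complex.ofReal_natCast]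
  refine ⟨isPositive_def'.2 ⟨isSelfAdjoint_defectOp _ T, fun x => ?_⟩,
    fun n hn => isPositive_def'.2 ⟨?_, fun x => ?_⟩⟩
  · rw [hβ]
    exact iterate_fwdDiff_pred_nonneg (fun n => sq_nonneg _) (hconcave x)
  · exact (isSelfAdjoint_sum_ofReal_smul _ _ fun j _ => isSelfAdjoint_defectOp j T).sub
      (adjoint_pow_mul_pow_eq_star_mul_self T n ▸ .star_mul_self _)
  · rw [reApplyInnerSelf_sub, reApplyInnerSelf_sum_ofReal_smul,
      reApplyInnerSelf_adjoint_pow_mul_pow, sub_nonneg]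
    simp_rw [hβ]
    exact le_sum_choose_mul_iterate_fwdDiff (hconcave x) hn
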